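/- Let Z be a sparsity pattern with associated digraph G, and let k ≥ 0 and q ≥ 1 be integers. Then the condition '(k+1)·|N^β_in(V')| + (k+1)·q·|N^α_in(V')| ≥ q·|V'| for every subset V' of the state nodes' holds if and only if the maximum flow value θ(k,q) on the weighted digraph 𝒢 equals n·q. -/
import Mathlib


/-- The α-in-neighbor set `N^α_in(V')` of a set `V'` of state nodes, for the digraph
associated with the sparsity pattern `Z`. -/
def NinA {n m : ℕ} (Z : Finset (Fin n × (Fin n ⊕ Fin m))) (V' : Finset (Fin n)) :
    Finset (Fin n) :=
  Finset.univ.filter fun j => ∃ i ∈ V', (i, Sum.inl j) ∈ Z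

/-- The β-in-neighbor set `N^β_in(V')` of a set `V'` of state nodes. -/
def NinB {n m : ℕ} (Z : Finset (Fin n × (Fin n ⊕ Fin m))) (V' : Finset (Fin n)) :
    Finset (Fin m) :=
  Finset.univ.filter fun j => ∃ i ∈ V', (i, Sum.inr j) ∈ Z

/-- A flow on a finite capacitated digraph (capacity `0` encodes the absence of an edge):
nonnegative, below capacity, and conserved at every node other than `s` and `t`. -/
def IsFlow {V : Type*} [Fintype V] (c : V → V → ℝ) (s t : V) (f : V → V → ℝ) : Prop :=
  (∀ u v, 0 ≤ f u v) ∧ (∀ u v, f u v ≤ c u v) ∧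
    ∀ v, v ≠ s → v ≠ t → (∑ u, f u v) = ∑ w, f v w

/-- The value of a flow: total flow on edges leaving the source `s`. -/
def flowValue {V : Type*} [Fintype V] (s : V) (f : V → V → ℝ) : ℝ := ∑ w, f s w

/-- The maximum flow value: the supremum of the values of all flows. -/
noncomputable def maxFlow {V : Type*} [Fintype V] (c : V → V → ℝ) (s t : V) : ℝ :=
  sSup {x : ℝ | ∃ f, IsFlow c s t f ∧ x = flowValue s f}

/-- The node set of the weighted digraph `𝒢`: source `s`, sink `t`, nodes `λ_i`
(copies of the control nodes), `ν_j` and `μ_j` (two copies of the state nodes). -/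
inductive GNode (n m : ℕ) where
  | s : GNode n m
  | t : GNode n m
  | lam : Fin m → GNode n m
  | nu : Fin n → GNode n m
  | mu : Fin n → GNode n m
deriving DecidableEq, Fintype

/-- The capacities of the weighted digraph `𝒢` built from `Z` and `(k, q)`. -/
def capG {n m : ℕ} (Z : Finset (Fin n × (Fin n ⊕ Fin m))) (k q : ℕ) :
    GNode n m → GNode n m → ℝ
  | .s, .lam _ => (k + 1 : ℕ)
  | .s, .nu _ => (q * (k + 1) : ℕ)
  | .lam i, .mu j => if (j, Sum.inr i) ∈ Z then ((k + 1 : ℕ) : ℝ) else 0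
  | .nu i, .mu j => if (j, Sum.inl i) ∈ Z then ((q * (k + 1) : ℕ) : ℝ) else 0
  | .mu _, .t => (q : ℕ)
  | _, _ => 0

def gEquiv (n m : ℕ) : (Unit ⊕ Unit ⊕ Fin m ⊕ Fin n ⊕ Fin n) ≃ GNode n m where
  toFun x := match x with
    | .inl _ => .s
    | .inr (.inl _) => .t
    | .inr (.inr (.inl i)) => .lam i
    | .inr (.inr (.inr (.inl j))) => .nu j
    | .inr (.inr (.inr (.inr j))) => .mu j
  invFun v := match v with
    | .s => .inl ()
    | .t => .inr (.inl ())
    | .lam i => .inr (.inr (.inl i))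
    | .nu j => .inr (.inr (.inr (.inl j)))
    | .mu j => .inr (.inr (.inr (.inr j)))
  left_inv x := by rcases x with _ | _ | _ | _ | _ <;> rfl
  right_inv v := by cases v <;> rfl

lemma sum_gnode {n m : ℕ} (h : GNode n m → ℝ) :
    ∑ v, h v = h .s + h .t + ((∑ i, h (.lam i)) + ((∑ j, h (.nu j)) + ∑ j, h (.mu j))) := by
  rw [← (gEquiv n m).sum_comp h]
  simp [gEquiv, Fintype.sum_sum_type, add_assoc]

lemma flow_le {n m : ℕ} (Z : Finset (Fin n × (Fin n ⊕ Fin m))) (k q : ℕ)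
    (f : GNode n m → GNode n m → ℝ) (hf : IsFlow (capG Z k q) GNode.s GNode.t f)
    (V' : Finset (Fin n)) :
    flowValue GNode.s f ≤ (k+1) * (NinB Z V').card + (k+1) * q * (NinA Z V').card
      + q * ((n - V'.card : ℕ) : ℝ) := by
  obtain ⟨hpos, hcap, hcons⟩ := hf
  have hzero : ∀ u v, capG Z k q u v = 0 → f u v = 0 := fun u v h =>
    le_antisymm (h ▸ hcap u v) (hpos u v)
  -- value equals inflow at t
  have hval : flowValue GNode.s f = ∑ j, f (.mu j) .t := by
    have hswap : ∑ v, (∑ w, f v w) = ∑ v, (∑ u, f u v) := Finset.sum_comm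
    rw [sum_gnode (fun v => ∑ w, f v w), sum_gnode (fun v => ∑ u, f u v)] at hswap
    have h1 : ∀ i : Fin m, (∑ w, f (.lam i) w) = ∑ u, f u (.lam i) :=
      fun i => (hcons _ (by simp) (by simp)).symm
    have h2 : ∀ j : Fin n, (∑ w, f (.nu j) w) = ∑ u, f u (.nu j) :=
      fun j => (hcons _ (by simp) (by simp)).symm
    have h3 : ∀ j : Fin n, (∑ w, f (.mu j) w) = ∑ u, f u (.mu j) :=
      fun j => (hcons _ (by simp) (by simp)).symm
    simp only [Finset.sum_congr rfl (fun i _ => h1 i), Finset.sum_congr rfl (fun i _ => h2 i),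
      Finset.sum_congr rfl (fun i _ => h3 i)] at hswap
    have hts : ∑ w, f GNode.t w = 0 := by
      rw [sum_gnode (fun w => f .t w)]
      simp [hzero GNode.t GNode.s rfl, hzero GNode.t GNode.t rfl,
        fun i => hzero GNode.t (GNode.lam i) rfl, fun j => hzero GNode.t (GNode.nu j) rfl,
        fun j => hzero GNode.t (GNode.mu j) rfl]
    have hins : ∑ u, f u GNode.s = 0 := by
      rw [sum_gnode (fun u => f u .s)]
      simp [hzero GNode.s GNode.s rfl, hzero GNode.t GNode.s rfl,
        fun i => hzero (GNode.lam i) GNode.s rfl, fun j => hzero (GNode.nu j) GNode.s rfl,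
        fun j => hzero (GNode.mu j) GNode.s rfl]
    have hint : ∑ u, f u GNode.t = ∑ j, f (.mu j) .t := by
      rw [sum_gnode (fun u => f u .t)]
      simp [hzero GNode.s GNode.t rfl, hzero GNode.t GNode.t rfl,
        fun i => hzero (GNode.lam i) GNode.t rfl, fun j => hzero (GNode.nu j) GNode.t rfl]
    have : (∑ w, f GNode.s w) + ∑ w, f GNode.t w = (∑ u, f u GNode.s) + ∑ u, f u GNode.t := by
      linarith [hswap]
    rw [hts, hins, hint] at this
    simpa [flowValue] using this
  have hmu : ∀ j : Fin n, f (.mu j) .t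
      = (∑ i, f (.lam i) (.mu j)) + ∑ i, f (.nu i) (.mu j) := by
    intro j
    have h := hcons (.mu j) (by simp) (by simp)
    rw [sum_gnode (fun u => f u (.mu j)), sum_gnode (fun w => f (.mu j) w)] at h
    simp [hzero GNode.s (GNode.mu j) rfl, hzero GNode.t (GNode.mu j) rfl,
      fun j' => hzero (GNode.mu j') (GNode.mu j) rfl,
      hzero (GNode.mu j) GNode.s rfl,
      fun i => hzero (GNode.mu j) (GNode.lam i) rfl,
      fun j' => hzero (GNode.mu j) (GNode.nu j') rfl,
      fun j' => hzero (GNode.mu j) (GNode.mu j') rfl] at h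
    linarith [h]
  have houtlam : ∀ i : Fin m, (∑ j, f (.lam i) (.mu j)) = f .s (.lam i) := by
    intro i
    have h := hcons (.lam i) (by simp) (by simp)
    rw [sum_gnode (fun u => f u (.lam i)), sum_gnode (fun w => f (.lam i) w)] at h
    simp [hzero GNode.t (GNode.lam i) rfl,
      fun i' => hzero (GNode.lam i') (GNode.lam i) rfl,
      fun j => hzero (GNode.nu j) (GNode.lam i) rfl,
      fun j => hzero (GNode.mu j) (GNode.lam i) rfl,
      hzero (GNode.lam i) GNode.s rfl, hzero (GNode.lam i) GNode.t rfl,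
      fun i' => hzero (GNode.lam i) (GNode.lam i') rfl,
      fun j => hzero (GNode.lam i) (GNode.nu j) rfl] at h
    linarith [h]
  have houtnu : ∀ i : Fin n, (∑ j, f (.nu i) (.mu j)) = f .s (.nu i) := by
    intro i
    have h := hcons (.nu i) (by simp) (by simp)
    rw [sum_gnode (fun u => f u (.nu i)), sum_gnode (fun w => f (.nu i) w)] at h
    simp [hzero GNode.t (GNode.nu i) rfl,
      fun i' => hzero (GNode.lam i') (GNode.nu i) rfl,
      fun j => hzero (GNode.nu j) (GNode.nu i) rfl,
      fun j => hzero (GNode.mu j) (GNode.nu i) rfl,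
      hzero (GNode.nu i) GNode.s rfl, hzero (GNode.nu i) GNode.t rfl,
      fun i' => hzero (GNode.nu i) (GNode.lam i') rfl,
      fun j => hzero (GNode.nu i) (GNode.nu j) rfl] at h
    linarith [h]
  -- split the sum over V' and its complement
  rw [hval, ← Finset.sum_add_sum_compl V' (fun j => f (.mu j) .t)]
  have hcompl : ∑ j ∈ V'ᶜ, f (.mu j) .t ≤ q * ((n - V'.card : ℕ) : ℝ) := by
    calc ∑ j ∈ V'ᶜ, f (.mu j) .t ≤ ∑ j ∈ V'ᶜ, (q : ℝ) := by
          refine Finset.sum_le_sum fun j _ => ?_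
          simpa [capG] using hcap (.mu j) .t
      _ = V'ᶜ.card * q := by rw [Finset.sum_const]; ring
      _ = q * ((n - V'.card : ℕ) : ℝ) := by
          rw [Finset.card_compl]; simp [mul_comm]
  have hlam : (∑ i, ∑ j ∈ V', f (.lam i) (.mu j)) ≤ (k+1) * (NinB Z V').card := by
    calc (∑ i, ∑ j ∈ V', f (.lam i) (.mu j))
        ≤ ∑ i, (if i ∈ NinB Z V' then ((k:ℝ)+1) else 0) := by
          refine Finset.sum_le_sum fun i _ => ?_
          by_cases hi : i ∈ NinB Z V'
          · rw [if_pos hi]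
            calc ∑ j ∈ V', f (.lam i) (.mu j) ≤ ∑ j, f (.lam i) (.mu j) :=
                  Finset.sum_le_sum_of_subset_of_nonneg (Finset.subset_univ V')
                    (fun j _ _ => hpos _ _)
              _ = f .s (.lam i) := houtlam i
              _ ≤ (k:ℝ)+1 := by have := hcap .s (.lam i); simp only [capG] at this; push_cast at this; linarith
          · rw [if_neg hi]
            have : ∀ j ∈ V', f (.lam i) (.mu j) = 0 := by
              intro j hj
              refine hzero _ _ ?_
              have hZ : (j, Sum.inr i) ∉ Z := fun hZ => hi (by
                simp only [NinB, Finset.mem_filter, Finset.mem_univ, true_and]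
                exact ⟨j, hj, hZ⟩)
              simp [capG, hZ]
            simp [Finset.sum_congr rfl this]
      _ = (k+1) * (NinB Z V').card := by
          rw [Finset.sum_ite_mem, Finset.univ_inter, Finset.sum_const]; ring
  have hnu : (∑ i, ∑ j ∈ V', f (.nu i) (.mu j)) ≤ (k+1) * q * (NinA Z V').card := by
    calc (∑ i, ∑ j ∈ V', f (.nu i) (.mu j))
        ≤ ∑ i, (if i ∈ NinA Z V' then ((q:ℝ)*((k:ℝ)+1)) else 0) := by
          refine Finset.sum_le_sum fun i _ => ?_
          by_cases hi : i ∈ NinA Z V'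
          · rw [if_pos hi]
            calc ∑ j ∈ V', f (.nu i) (.mu j) ≤ ∑ j, f (.nu i) (.mu j) :=
                  Finset.sum_le_sum_of_subset_of_nonneg (Finset.subset_univ V')
                    (fun j _ _ => hpos _ _)
              _ = f .s (.nu i) := houtnu i
              _ ≤ (q:ℝ)*((k:ℝ)+1) := by
                  have := hcap .s (.nu i); simp only [capG] at this; push_cast at this
                  linarith
          · rw [if_neg hi]
            have : ∀ j ∈ V', f (.nu i) (.mu j) = 0 := by
              intro j hj
              refine hzero _ _ ?_
              have hZ : (j, Sum.inl i) ∉ Z := fun hZ => hi (by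
                simp only [NinA, Finset.mem_filter, Finset.mem_univ, true_and]
                exact ⟨j, hj, hZ⟩)
              simp [capG, hZ]
            simp [Finset.sum_congr rfl this]
      _ = (k+1) * q * (NinA Z V').card := by
          rw [Finset.sum_ite_mem, Finset.univ_inter, Finset.sum_const]; ring
  have hsumV : ∑ j ∈ V', f (.mu j) .t
      = (∑ i, ∑ j ∈ V', f (.lam i) (.mu j)) + ∑ i, ∑ j ∈ V', f (.nu i) (.mu j) := by
    rw [Finset.sum_congr rfl (fun j _ => hmu j), Finset.sum_add_distrib,
      Finset.sum_comm, Finset.sum_comm (s := V')]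
  rw [hsumV]
  linarith

def flowF {n m : ℕ} (q : ℕ) (A : Fin m → Fin n → ℕ) (B : Fin n → Fin n → ℕ) :
    GNode n m → GNode n m → ℝ
  | .s, .lam i => ((∑ j, A i j : ℕ) : ℝ)
  | .s, .nu i => ((∑ j, B i j : ℕ) : ℝ)
  | .lam i, .mu j => ((A i j : ℕ) : ℝ)
  | .nu i, .mu j => ((B i j : ℕ) : ℝ)
  | .mu _, .t => ((q : ℕ) : ℝ)
  | _, _ => 0

lemma exists_flow {n m : ℕ} (Z : Finset (Fin n × (Fin n ⊕ Fin m))) (k q : ℕ) (hq : 1 ≤ q)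
    (H : ∀ V' : Finset (Fin n),
        q * V'.card ≤ (k + 1) * (NinB Z V').card + (k + 1) * q * (NinA Z V').card) :
    ∃ f, IsFlow (capG Z k q) GNode.s GNode.t f ∧ flowValue GNode.s f = ((n * q : ℕ) : ℝ) := by
  classical
  set t' : Fin n → Finset ((Fin m × Fin (k+1)) ⊕ (Fin n × Fin (q*(k+1)))) := fun j =>
    ((Finset.univ.filter fun i : Fin m => (j, Sum.inr i) ∈ Z) ×ˢ Finset.univ).disjSum
      ((Finset.univ.filter fun i : Fin n => (j, Sum.inl i) ∈ Z) ×ˢ Finset.univ) with ht'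
  have hall : ∀ s : Finset (Fin n × Fin q), s.card ≤ (s.biUnion fun p => t' p.1).card := by
    intro s
    set T := s.image Prod.fst with hT
    have h1 : s.biUnion (fun p => t' p.1) = T.biUnion t' := by
      ext a
      simp only [Finset.mem_biUnion, hT, Finset.mem_image]
      constructor
      · rintro ⟨p, hp, ha⟩; exact ⟨p.1, ⟨p, hp, rfl⟩, ha⟩
      · rintro ⟨j, ⟨p, hp, rfl⟩, ha⟩; exact ⟨p, hp, ha⟩
    have h2 : T.biUnion t' =
        ((NinB Z T) ×ˢ Finset.univ).disjSum ((NinA Z T) ×ˢ Finset.univ) := by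
      ext a
      rcases a with ⟨i, c⟩ | ⟨i, c⟩ <;>
        simp [ht', NinB, NinA, Finset.mem_biUnion] <;>
        exact ⟨fun ⟨j, hj, hZ⟩ => ⟨j, hj, hZ⟩, fun ⟨j, hj, hZ⟩ => ⟨j, hj, hZ⟩⟩
    have hsub : s ⊆ T ×ˢ Finset.univ := fun p hp =>
      Finset.mem_product.2 ⟨Finset.mem_image_of_mem _ hp, Finset.mem_univ _⟩
    calc s.card ≤ (T ×ˢ (Finset.univ : Finset (Fin q))).card := Finset.card_le_card hsub
      _ = T.card * q := by rw [Finset.card_product, Finset.card_univ, Fintype.card_fin]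
      _ = q * T.card := mul_comm _ _
      _ ≤ (k + 1) * (NinB Z T).card + (k + 1) * q * (NinA Z T).card := H T
      _ = (NinB Z T).card * (k+1) + (NinA Z T).card * (q*(k+1)) := by ring
      _ = (s.biUnion fun p => t' p.1).card := by
          rw [h1, h2, Finset.card_disjSum, Finset.card_product, Finset.card_product,
            Finset.card_univ, Finset.card_univ, Fintype.card_fin, Fintype.card_fin]
  obtain ⟨F, hFinj, hFmem⟩ :=
    (Finset.all_card_le_biUnion_card_iff_exists_injective (fun p : Fin n × Fin q => t' p.1)).1
      hall
  set g : Fin n → Fin q → Fin m ⊕ Fin n := fun j c => Sum.map Prod.fst Prod.fst (F (j, c))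
    with hg
  set A : Fin m → Fin n → ℕ := fun i j =>
    (Finset.univ.filter fun c : Fin q => g j c = Sum.inl i).card with hA
  set B : Fin n → Fin n → ℕ := fun i j =>
    (Finset.univ.filter fun c : Fin q => g j c = Sum.inr i).card with hB
  have hglF : ∀ j c i, g j c = Sum.inl i → ∃ c', F (j, c) = Sum.inl (i, c') := by
    intro j c i hgi
    rcases hFc : F (j, c) with p | p
    · rw [hg] at hgi; simp only [hFc, Sum.map_inl] at hgi
      obtain rfl : p.1 = i := Sum.inl.inj hgi
      exact ⟨p.2, rfl⟩
    · rw [hg] at hgi; simp [hFc] at hgi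
  have hgrF : ∀ j c i, g j c = Sum.inr i → ∃ c', F (j, c) = Sum.inr (i, c') := by
    intro j c i hgi
    rcases hFc : F (j, c) with p | p
    · rw [hg] at hgi; simp [hFc] at hgi
    · rw [hg] at hgi; simp only [hFc, Sum.map_inr] at hgi
      obtain rfl : p.1 = i := Sum.inr.inj hgi
      exact ⟨p.2, rfl⟩
  have hmemB : ∀ j c i c', F (j, c) = Sum.inl (i, c') → (j, Sum.inr i) ∈ Z := by
    intro j c i c' hF
    have := hFmem (j, c)
    rw [hF] at this
    simpa [ht'] using this
  have hmemA : ∀ j c i c', F (j, c) = Sum.inr (i, c') → (j, Sum.inl i) ∈ Z := by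
    intro j c i c' hF
    have := hFmem (j, c)
    rw [hF] at this
    simpa [ht'] using this
  have hsum : ∀ j, (∑ i, A i j) + (∑ i, B i j) = q := by
    intro j
    have hfib := Finset.card_eq_sum_card_fiberwise
      (f := g j) (s := (Finset.univ : Finset (Fin q)))
      (t := (Finset.univ : Finset (Fin m ⊕ Fin n))) (fun x _ => Finset.mem_univ _)
    rw [Finset.card_univ, Fintype.card_fin, Fintype.sum_sum_type] at hfib
    rw [hA, hB]
    exact hfib.symm
  have hAle : ∀ i, (∑ j, A i j) ≤ k + 1 := by
    intro i
    set S := Finset.univ.filter fun p : Fin n × Fin q => g p.1 p.2 = Sum.inl i with hS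
    have hcard : (∑ j, A i j) = S.card := by
      have hfib := Finset.card_eq_sum_card_fiberwise
        (f := Prod.fst) (s := S) (t := (Finset.univ : Finset (Fin n)))
        (fun x _ => Finset.mem_univ _)
      rw [hfib]
      refine Finset.sum_congr rfl fun j _ => ?_
      rw [hA]
      have himg : S.filter (fun p => p.1 = j)
          = (Finset.univ.filter fun c : Fin q => g j c = Sum.inl i).image fun c => (j, c) := by
        ext ⟨j', c⟩
        simp only [hS, Finset.mem_filter, Finset.mem_univ, true_and, Finset.mem_image]
        constructor
        · rintro ⟨h1, rfl⟩; exact ⟨c, h1, rfl⟩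
        · rintro ⟨c', hc', heq⟩
          obtain ⟨rfl, rfl⟩ : j = j' ∧ c' = c := by
            constructor <;> [exact (Prod.mk.injEq _ _ _ _ ▸ heq).1;
              exact congrArg Prod.snd heq]
          exact ⟨hc', rfl⟩
      rw [himg, Finset.card_image_of_injective _ (fun a b hab => congrArg Prod.snd hab)]
    rw [hcard]
    have : S.card ≤ (Finset.univ : Finset (Fin (k+1))).card := by
      refine Finset.card_le_card_of_injOn
        (fun p => Sum.elim (fun pr => pr.2) (fun _ => (⟨0, Nat.succ_pos k⟩ : Fin (k+1))) (F p))
        (fun p _ => Finset.mem_univ _) ?_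
      intro p1 hp1 p2 hp2 hphi
      simp only [hS, Finset.coe_filter, Set.mem_setOf_eq, Finset.mem_univ, true_and] at hp1 hp2
      obtain ⟨c1, hc1⟩ := hglF p1.1 p1.2 i hp1
      obtain ⟨c2, hc2⟩ := hglF p2.1 p2.2 i hp2
      rw [Prod.mk.eta] at hc1 hc2
      simp only [hc1, hc2, Sum.elim_inl] at hphi
      apply hFinj
      rw [hc1, hc2, hphi]
    simpa using this
  have hBle : ∀ i, (∑ j, B i j) ≤ q * (k + 1) := by
    intro i
    set S := Finset.univ.filter fun p : Fin n × Fin q => g p.1 p.2 = Sum.inr i with hS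
    have hcard : (∑ j, B i j) = S.card := by
      have hfib := Finset.card_eq_sum_card_fiberwise
        (f := Prod.fst) (s := S) (t := (Finset.univ : Finset (Fin n)))
        (fun x _ => Finset.mem_univ _)
      rw [hfib]
      refine Finset.sum_congr rfl fun j _ => ?_
      rw [hB]
      have himg : S.filter (fun p => p.1 = j)
          = (Finset.univ.filter fun c : Fin q => g j c = Sum.inr i).image fun c => (j, c) := by
        ext ⟨j', c⟩
        simp only [hS, Finset.mem_filter, Finset.mem_univ, true_and, Finset.mem_image]
        constructor
        · rintro ⟨h1, rfl⟩; exact ⟨c, h1, rfl⟩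
        · rintro ⟨c', hc', heq⟩
          obtain ⟨rfl, rfl⟩ : j = j' ∧ c' = c := by
            constructor <;> [exact (Prod.mk.injEq _ _ _ _ ▸ heq).1;
              exact congrArg Prod.snd heq]
          exact ⟨hc', rfl⟩
      rw [himg, Finset.card_image_of_injective _ (fun a b hab => congrArg Prod.snd hab)]
    rw [hcard]
    have hq1 : 0 < q * (k+1) := Nat.mul_pos hq (Nat.succ_pos k)
    have : S.card ≤ (Finset.univ : Finset (Fin (q*(k+1)))).card := by
      refine Finset.card_le_card_of_injOn
        (fun p => Sum.elim (fun _ => (⟨0, hq1⟩ : Fin (q*(k+1)))) (fun pr => pr.2) (F p))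
        (fun p _ => Finset.mem_univ _) ?_
      intro p1 hp1 p2 hp2 hphi
      simp only [hS, Finset.coe_filter, Set.mem_setOf_eq, Finset.mem_univ, true_and] at hp1 hp2
      obtain ⟨c1, hc1⟩ := hgrF p1.1 p1.2 i hp1
      obtain ⟨c2, hc2⟩ := hgrF p2.1 p2.2 i hp2
      rw [Prod.mk.eta] at hc1 hc2
      simp only [hc1, hc2, Sum.elim_inr] at hphi
      apply hFinj
      rw [hc1, hc2, hphi]
    simpa using this
  have hAZ : ∀ i j, (j, Sum.inr i) ∉ Z → A i j = 0 := by
    intro i j hZ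
    rw [hA, Finset.card_eq_zero, Finset.filter_eq_empty_iff]
    intro c _ hgi
    obtain ⟨c', hF⟩ := hglF j c i hgi
    exact hZ (hmemB j c i c' hF)
  have hBZ : ∀ i j, (j, Sum.inl i) ∉ Z → B i j = 0 := by
    intro i j hZ
    rw [hB, Finset.card_eq_zero, Finset.filter_eq_empty_iff]
    intro c _ hgi
    obtain ⟨c', hF⟩ := hgrF j c i hgi
    exact hZ (hmemA j c i c' hF)
  refine ⟨flowF q A B, ⟨?_, ?_, ?_⟩, ?_⟩
  · intro u v
    cases u <;> cases v <;> simp only [flowF] <;>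
      first
      | exact le_rfl
      | exact Nat.cast_nonneg _
  · intro u v
    cases u <;> cases v <;> simp only [flowF, capG] <;> try exact le_rfl
    case s.lam i => exact_mod_cast hAle i
    case s.nu i => exact_mod_cast hBle i
    case lam.mu i j =>
      by_cases hZ : (j, Sum.inr i) ∈ Z
      · rw [if_pos hZ]
        have : A i j ≤ k + 1 :=
          le_trans (Finset.single_le_sum (f := fun j' => A i j') (fun _ _ => Nat.zero_le _)
            (Finset.mem_univ j)) (hAle i)
        exact_mod_cast this
      · rw [if_neg hZ, hAZ i j hZ]; simp
    case nu.mu i j =>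
      by_cases hZ : (j, Sum.inl i) ∈ Z
      · rw [if_pos hZ]
        have : B i j ≤ q * (k + 1) :=
          le_trans (Finset.single_le_sum (f := fun j' => B i j') (fun _ _ => Nat.zero_le _)
            (Finset.mem_univ j)) (hBle i)
        exact_mod_cast this
      · rw [if_neg hZ, hBZ i j hZ]; simp
  · intro v hvs hvt
    cases v with
    | s => exact absurd rfl hvs
    | t => exact absurd rfl hvt
    | lam i =>
      rw [sum_gnode (fun u => flowF q A B u (.lam i)),
        sum_gnode (fun w => flowF q A B (.lam i) w)]
      simp [flowF]
    | nu i =>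
      rw [sum_gnode (fun u => flowF q A B u (.nu i)),
        sum_gnode (fun w => flowF q A B (.nu i) w)]
      simp [flowF]
    | mu j =>
      rw [sum_gnode (fun u => flowF q A B u (.mu j)),
        sum_gnode (fun w => flowF q A B (.mu j) w)]
      simp only [flowF, Finset.sum_const_zero, add_zero, zero_add]
      exact_mod_cast hsum j
  · rw [flowValue, sum_gnode (fun w => flowF q A B GNode.s w)]
    have key : (∑ i, ∑ j, A i j) + (∑ i, ∑ j, B i j) = n * q := by
      have e1 : (∑ i, ∑ j, A i j) = ∑ j, ∑ i, A i j := Finset.sum_comm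
      have e2 : (∑ i : Fin n, ∑ j, B i j) = ∑ j, ∑ i, B i j := Finset.sum_comm
      rw [e1, e2, ← Finset.sum_add_distrib]
      simp [hsum, Finset.sum_const, mul_comm]
    simp only [flowF, Finset.sum_const_zero, add_zero, zero_add]
    exact_mod_cast key

/-- the counting condition
`(k+1)|N^β_in(V')| + (k+1)q|N^α_in(V')| ≥ q|V'|` for every subset `V'` of the state
nodes holds iff the maximum flow value `θ(k,q)` on `𝒢` equals `nq`. -/
theorem stmt4 {n m : ℕ} (hn : 0 < n) (hm : 0 < m)
    (Z : Finset (Fin n × (Fin n ⊕ Fin m))) (k q : ℕ) (hq : 1 ≤ q) :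
    (∀ V' : Finset (Fin n),
        q * V'.card ≤ (k + 1) * (NinB Z V').card + (k + 1) * q * (NinA Z V').card) ↔
      maxFlow (capG Z k q) GNode.s GNode.t = ((n * q : ℕ) : ℝ) := by
  have hub : ∀ x ∈ {x : ℝ | ∃ f, IsFlow (capG Z k q) GNode.s GNode.t f ∧
      x = flowValue GNode.s f}, x ≤ ((n * q : ℕ) : ℝ) := by
    rintro x ⟨f, hf, rfl⟩
    have h := flow_le Z k q f hf ∅
    have hB0 : NinB Z ∅ = ∅ := by simp [NinB]
    have hA0 : NinA Z ∅ = ∅ := by simp [NinA]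
    rw [hB0, hA0] at h
    simp only [Finset.card_empty, Nat.sub_zero] at h
    push_cast at h ⊢
    linarith
  constructor
  · intro H
    obtain ⟨f0, hf0, hval0⟩ := exists_flow Z k q hq H
    unfold maxFlow
    refine le_antisymm (Real.sSup_le hub (by positivity)) ?_
    exact le_csSup ⟨_, fun x hx => hub x hx⟩ ⟨f0, hf0, hval0.symm⟩
  · intro heq V'
    have hub2 : maxFlow (capG Z k q) GNode.s GNode.t
        ≤ (k+1) * (NinB Z V').card + (k+1) * q * (NinA Z V').card
          + q * ((n - V'.card : ℕ) : ℝ) := by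
      refine Real.sSup_le ?_ (by positivity)
      rintro x ⟨f, hf, rfl⟩
      exact flow_le Z k q f hf V'
    rw [heq] at hub2
    have hcard : V'.card ≤ n := by simpa using Finset.card_le_univ V'
    have hsub : ((n - V'.card : ℕ) : ℝ) = (n : ℝ) - V'.card := by
      push_cast [Nat.cast_sub hcard]; ring
    rw [hsub] at hub2
    have hfin : (q : ℝ) * V'.card
        ≤ (k+1) * (NinB Z V').card + (k+1) * q * (NinA Z V').card := by
      push_cast at hub2
      nlinarith [hub2]
    exact_mod_cast hfin
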